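/- Let f₁,…,f_k be an orthonormal basis (with respect to a given inner product ⟨·,·⟩_B on a k-dimensional space D of linear functionals on ℝⁿ) and let A be the symmetric bilinear form on ℝⁿ defined by A(v, w) = Σᵢ fᵢ(v)fᵢ(w). Then the inner product on D induced by A via the map Ψ_A : v ↦ A(v, ·) (pushing forward A from any complement of ker A) coincides with the original inner product ⟨·,·⟩_B. -/
import Mathlib


open Matrix Module

theorem stmt_14 (n k : ℕ) (f : Fin k → ((Fin n → ℝ) →ₗ[ℝ] ℝ))
    (hf : LinearIndependent ℝ f)
    (β : LinearMap.BilinForm ℝ ((Fin n → ℝ) → ℝ))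
    (hβsymm : ∀ φ ψ, β φ ψ = β ψ φ)
    (horth : ∀ i j, β (f i) (f j) = if i = j then 1 else 0)
    (ΨA : (Fin n → ℝ) → ((Fin n → ℝ) → ℝ))
    (hΨA : ∀ v, ΨA v = fun w => ∑ i, f i v * f i w) :
    ∀ u v : Fin n → ℝ, β (ΨA u) (ΨA v) = ∑ i, f i u * f i v := by
  intro u v
  have h : ∀ x, ΨA x = ∑ i, (f i x) • (⇑(f i) : (Fin n → ℝ) → ℝ) := by
    intro x
    rw [hΨA]
    funext w
    simp [Finset.sum_apply]
  rw [h, h]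
  simp only [map_sum, _root_.map_smul, LinearMap.map_smul₂, LinearMap.sum_apply, LinearMap.smul_apply, smul_eq_mul, horth,
    mul_ite, mul_one, mul_zero, Finset.sum_ite_eq', Finset.mem_univ, if_true]
  exact Finset.sum_congr rfl fun i _ => mul_comm _ _
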